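/- arXiv:1904.07134 — 3 statements merged into one kernel-verified Lean document; each statement's English description precedes it below -/
import Mathlib

section
/- In G₂ = ⟨x, y ∣ x⁻¹y²xy², y⁻¹x²yx²⟩, the subgroup N generated by x², y², and (xy)² is a normal abelian subgroup of G₂. -/
def hwRels (n : ℕ) : Set (FreeGroup (Fin n)) :=
  {r | ∃ i j : Fin n, i ≠ j ∧
    r = (FreeGroup.of i)⁻¹ * (FreeGroup.of j) ^ 2 * FreeGroup.of i * (FreeGroup.of j) ^ 2}

abbrev HW (n : ℕ) := PresentedGroup (hwRels n)

section Aux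

variable {G : Type*} [Group G]

/-- direct consequence of the relator: `x⁻¹ y² x = y⁻²`. -/
lemma hw_K1inv {x y : G} (h1 : x⁻¹ * y ^ 2 * x * y ^ 2 = 1) :
    x⁻¹ * y ^ 2 * x = (y ^ 2)⁻¹ :=
  mul_eq_one_iff_eq_inv.mp h1

/-- pointed move lemma: `y² x = x y⁻²`. -/
lemma hw_mA {x y : G} (h1 : x⁻¹ * y ^ 2 * x * y ^ 2 = 1) :
    ∀ t : G, y * (y * (x * t)) = x * (y⁻¹ * (y⁻¹ * t)) := by
  intro t
  calc y * (y * (x * t)) = (x * (x⁻¹ * y ^ 2 * x)) * t := by (try simp only [pow_two]); group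
    _ = (x * (y ^ 2)⁻¹) * t := by rw [hw_K1inv h1]
    _ = x * (y⁻¹ * (y⁻¹ * t)) := by (try simp only [pow_two]); group

/-- `x y² x⁻¹ = y⁻²`. -/
lemma hw_K1 {x y : G} (h1 : x⁻¹ * y ^ 2 * x * y ^ 2 = 1) :
    x * y ^ 2 * x⁻¹ = (y ^ 2)⁻¹ := by
  have key : y ^ 2 * (x * y ^ 2 * x⁻¹) = 1 := by
    calc y ^ 2 * (x * y ^ 2 * x⁻¹) = y * (y * (x * (y * (y * x⁻¹)))) := by (try simp only [pow_two]); group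
      _ = x * (y⁻¹ * (y⁻¹ * (y * (y * x⁻¹)))) := by rw [hw_mA h1]
      _ = 1 := by (try simp only [pow_two]); group
  exact (inv_eq_of_mul_eq_one_right key).symm

/-- pointed move lemma: `y² x⁻¹ = x⁻¹ y⁻²`. -/
lemma hw_mB {x y : G} (h1 : x⁻¹ * y ^ 2 * x * y ^ 2 = 1) :
    ∀ t : G, y * (y * (x⁻¹ * t)) = x⁻¹ * (y⁻¹ * (y⁻¹ * t)) := by
  intro t
  calc y * (y * (x⁻¹ * t)) = (x⁻¹ * (x * y ^ 2 * x⁻¹)) * t := by (try simp only [pow_two]); group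
    _ = (x⁻¹ * (y ^ 2)⁻¹) * t := by rw [hw_K1 h1]
    _ = x⁻¹ * (y⁻¹ * (y⁻¹ * t)) := by (try simp only [pow_two]); group

/-- `x⁻¹ (xy)² x = (xy)⁻²`. -/
lemma hw_K3inv {x y : G} (h1 : x⁻¹ * y ^ 2 * x * y ^ 2 = 1)
    (h2 : y⁻¹ * x ^ 2 * y * x ^ 2 = 1) :
    x⁻¹ * (x * y) ^ 2 * x = ((x * y) ^ 2)⁻¹ := by
  have key : (x * y) ^ 2 * (x⁻¹ * (x * y) ^ 2 * x) = 1 := by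
    calc (x * y) ^ 2 * (x⁻¹ * (x * y) ^ 2 * x)
        = x * (y * (x * (y * (y * (x * (y * x)))))) := by (try simp only [pow_two]); group
      _ = x * (y * (x * (x * (y⁻¹ * (y⁻¹ * (y * x)))))) := by rw [hw_mA h1]
      _ = x * (y * (x * (x * (y⁻¹ * x)))) := by (try simp only [pow_two]); group
      _ = x * (y * (y⁻¹ * (x⁻¹ * (x⁻¹ * x)))) := by rw [hw_mB h2]
      _ = 1 := by (try simp only [pow_two]); group
  exact (inv_eq_of_mul_eq_one_right key).symm

/-- `x (xy)² x⁻¹ = (xy)⁻²`. -/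
lemma hw_K3 {x y : G} (h1 : x⁻¹ * y ^ 2 * x * y ^ 2 = 1)
    (h2 : y⁻¹ * x ^ 2 * y * x ^ 2 = 1) :
    x * (x * y) ^ 2 * x⁻¹ = ((x * y) ^ 2)⁻¹ := by
  have key : (x * y) ^ 2 * (x * (x * y) ^ 2 * x⁻¹) = 1 := by
    calc (x * y) ^ 2 * (x * (x * y) ^ 2 * x⁻¹)
        = x * (y * (x * (y * (x * (x * (y * (x * (y * x⁻¹)))))))) := by (try simp only [pow_two]); group
      _ = x * (y * (x * (y * (y * (x⁻¹ * (x⁻¹ * (x * (y * x⁻¹)))))))) := by rw [hw_mA h2]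
      _ = x * (y * (x * (y * (y * (x⁻¹ * (y * x⁻¹)))))) := by (try simp only [pow_two]); group
      _ = x * (y * (x * (x⁻¹ * (y⁻¹ * (y⁻¹ * (y * x⁻¹)))))) := by rw [hw_mB h1]
      _ = 1 := by (try simp only [pow_two]); group
  exact (inv_eq_of_mul_eq_one_right key).symm

/-- `y⁻¹ (xy)² y = (xy)⁻²`. -/
lemma hw_K4inv {x y : G} (h1 : x⁻¹ * y ^ 2 * x * y ^ 2 = 1)
    (h2 : y⁻¹ * x ^ 2 * y * x ^ 2 = 1) :
    y⁻¹ * (x * y) ^ 2 * y = ((x * y) ^ 2)⁻¹ := by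
  have key : (x * y) ^ 2 * (y⁻¹ * (x * y) ^ 2 * y) = 1 := by
    calc (x * y) ^ 2 * (y⁻¹ * (x * y) ^ 2 * y)
        = x * (y * (x * (x * (y * (x * (y * y)))))) := by (try simp only [pow_two]); group
      _ = x * (y * (y * (x⁻¹ * (x⁻¹ * (x * (y * y)))))) := by rw [hw_mA h2]
      _ = x * (y * (y * (x⁻¹ * (y * y)))) := by (try simp only [pow_two]); group
      _ = x * (x⁻¹ * (y⁻¹ * (y⁻¹ * (y * y)))) := by rw [hw_mB h1]
      _ = 1 := by (try simp only [pow_two]); group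
  exact (inv_eq_of_mul_eq_one_right key).symm

/-- `y (xy)² y⁻¹ = (xy)⁻²`. -/
lemma hw_K4 {x y : G} (h1 : x⁻¹ * y ^ 2 * x * y ^ 2 = 1)
    (h2 : y⁻¹ * x ^ 2 * y * x ^ 2 = 1) :
    y * (x * y) ^ 2 * y⁻¹ = ((x * y) ^ 2)⁻¹ := by
  have key : (x * y) ^ 2 * (y * (x * y) ^ 2 * y⁻¹) = 1 := by
    calc (x * y) ^ 2 * (y * (x * y) ^ 2 * y⁻¹)
        = x * (y * (x * (y * (y * (x * (y * x)))))) := by (try simp only [pow_two]); group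
      _ = x * (y * (x * (x * (y⁻¹ * (y⁻¹ * (y * x)))))) := by rw [hw_mA h1]
      _ = x * (y * (x * (x * (y⁻¹ * x)))) := by (try simp only [pow_two]); group
      _ = x * (y * (y⁻¹ * (x⁻¹ * (x⁻¹ * x)))) := by rw [hw_mB h2]
      _ = 1 := by (try simp only [pow_two]); group
  exact (inv_eq_of_mul_eq_one_right key).symm

/-- if `g a g⁻¹ = a⁻¹` then `g²` commutes with `a`. -/
lemma hw_conj_inv_comm {g a : G} (h : g * a * g⁻¹ = a⁻¹) : g ^ 2 * a = a * g ^ 2 := by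
  have h2 : g ^ 2 * a * (g ^ 2)⁻¹ = a := by
    calc g ^ 2 * a * (g ^ 2)⁻¹ = g * (g * a * g⁻¹) * g⁻¹ := by (try simp only [pow_two]); group
      _ = g * a⁻¹ * g⁻¹ := by rw [h]
      _ = (g * a * g⁻¹)⁻¹ := by (try simp only [pow_two]); group
      _ = a⁻¹⁻¹ := by rw [h]
      _ = a := inv_inv a
  calc g ^ 2 * a = (g ^ 2 * a * (g ^ 2)⁻¹) * g ^ 2 := by (try simp only [pow_two]); group
    _ = a * g ^ 2 := by rw [h2]

end Aux

theorem hw_two_normal_abelian_subgroup :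
    ∀ N : Subgroup (HW 2),
      N = Subgroup.closure {(PresentedGroup.of (rels := hwRels 2) 0) ^ 2,
        (PresentedGroup.of 1) ^ 2,
        (PresentedGroup.of (rels := hwRels 2) 0 * PresentedGroup.of 1) ^ 2} →
      N.Normal ∧ ∀ a ∈ N, ∀ b ∈ N, a * b = b * a := by
  intro N hN
  set x : HW 2 := PresentedGroup.of 0 with hxdef
  set y : HW 2 := PresentedGroup.of 1 with hydef
  -- the relations hold in the presented group
  have hrel : ∀ i j : Fin 2, i ≠ j →
      (PresentedGroup.of (rels := hwRels 2) i)⁻¹ * (PresentedGroup.of j) ^ 2 *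
        PresentedGroup.of i * (PresentedGroup.of j) ^ 2 = 1 := by
    intro i j hij
    have hr : ((FreeGroup.of i)⁻¹ * (FreeGroup.of j) ^ 2 * FreeGroup.of i *
        (FreeGroup.of j) ^ 2) ∈ Subgroup.normalClosure (hwRels 2) :=
      Subgroup.subset_normalClosure ⟨i, j, hij, rfl⟩
    have h1 : PresentedGroup.mk (hwRels 2) ((FreeGroup.of i)⁻¹ * (FreeGroup.of j) ^ 2 *
        FreeGroup.of i * (FreeGroup.of j) ^ 2) = 1 :=
      (QuotientGroup.eq_one_iff _).mpr hr
    simpa [PresentedGroup.of, map_mul, map_inv, map_pow] using h1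
  have h1 : x⁻¹ * y ^ 2 * x * y ^ 2 = 1 := hrel 0 1 (by decide)
  have h2 : y⁻¹ * x ^ 2 * y * x ^ 2 = 1 := hrel 1 0 (by decide)
  have hx2 : x ^ 2 ∈ N := hN ▸ Subgroup.subset_closure (by left; rfl)
  have hy2 : y ^ 2 ∈ N := hN ▸ Subgroup.subset_closure (by right; left; rfl)
  have hxy2 : (x * y) ^ 2 ∈ N := hN ▸ Subgroup.subset_closure (by right; right; rfl)
  -- conjugation by any g that fixes the three generators (into N) preserves N
  have main : ∀ g : HW 2, g * x ^ 2 * g⁻¹ ∈ N → g * y ^ 2 * g⁻¹ ∈ N →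
      g * (x * y) ^ 2 * g⁻¹ ∈ N → ∀ n ∈ N, g * n * g⁻¹ ∈ N := by
    intro g hgx hgy hgxy n hn
    have hmap : N.map (MulAut.conj g).toMonoidHom ≤ N := by
      conv_lhs => rw [hN]
      rw [MonoidHom.map_closure, Subgroup.closure_le]
      rintro _ ⟨s, hs, rfl⟩
      simp only [Set.mem_insert_iff, Set.mem_singleton_iff] at hs
      rcases hs with rfl | rfl | rfl
      · simpa using hgx
      · simpa using hgy
      · simpa using hgxy
    exact hmap ⟨n, hn, by simp⟩
  have hx_all : ∀ n ∈ N, x * n * x⁻¹ ∈ N := by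
    refine main x ?_ ?_ ?_
    · rw [show x * x ^ 2 * x⁻¹ = x ^ 2 by (try simp only [pow_two]); group]; exact hx2
    · rw [hw_K1 h1]; exact inv_mem hy2
    · rw [hw_K3 h1 h2]; exact inv_mem hxy2
  have hxinv_all : ∀ n ∈ N, x⁻¹ * n * x ∈ N := by
    have := main x⁻¹ ?_ ?_ ?_
    · simpa using this
    · rw [show x⁻¹ * x ^ 2 * x⁻¹⁻¹ = x ^ 2 by (try simp only [pow_two]); group]; exact hx2
    · rw [show x⁻¹ * y ^ 2 * x⁻¹⁻¹ = x⁻¹ * y ^ 2 * x by group, hw_K1inv h1]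
      exact inv_mem hy2
    · rw [show x⁻¹ * (x * y) ^ 2 * x⁻¹⁻¹ = x⁻¹ * (x * y) ^ 2 * x by group,
        hw_K3inv h1 h2]
      exact inv_mem hxy2
  have hy_all : ∀ n ∈ N, y * n * y⁻¹ ∈ N := by
    refine main y ?_ ?_ ?_
    · rw [hw_K1 h2]; exact inv_mem hx2
    · rw [show y * y ^ 2 * y⁻¹ = y ^ 2 by (try simp only [pow_two]); group]; exact hy2
    · rw [hw_K4 h1 h2]; exact inv_mem hxy2
  have hyinv_all : ∀ n ∈ N, y⁻¹ * n * y ∈ N := by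
    have := main y⁻¹ ?_ ?_ ?_
    · simpa using this
    · rw [show y⁻¹ * x ^ 2 * y⁻¹⁻¹ = y⁻¹ * x ^ 2 * y by group, hw_K1inv h2]
      exact inv_mem hx2
    · rw [show y⁻¹ * y ^ 2 * y⁻¹⁻¹ = y ^ 2 by (try simp only [pow_two]); group]; exact hy2
    · rw [show y⁻¹ * (x * y) ^ 2 * y⁻¹⁻¹ = y⁻¹ * (x * y) ^ 2 * y by group,
        hw_K4inv h1 h2]
      exact inv_mem hxy2
  constructor
  · -- normality
    rw [← Subgroup.normalizer_eq_top_iff, eq_top_iff,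
      ← PresentedGroup.closure_range_of (hwRels 2), Subgroup.closure_le]
    rintro _ ⟨i, rfl⟩
    have hmx : x ∈ Subgroup.normalizer (N : Set (HW 2)) := by
      rw [Subgroup.mem_normalizer_iff]
      intro h
      refine ⟨fun hh => hx_all h hh, fun hh => ?_⟩
      have := hxinv_all _ hh
      rwa [show x⁻¹ * (x * h * x⁻¹) * x = h by (try simp only [pow_two]); group] at this
    have hmy : y ∈ Subgroup.normalizer (N : Set (HW 2)) := by
      rw [Subgroup.mem_normalizer_iff]
      intro h
      refine ⟨fun hh => hy_all h hh, fun hh => ?_⟩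
      have := hyinv_all _ hh
      rwa [show y⁻¹ * (y * h * y⁻¹) * y = h by (try simp only [pow_two]); group] at this
    fin_cases i
    · exact hmx
    · exact hmy
  · -- abelian
    -- the three generators pairwise commute
    have cab : y ^ 2 * x ^ 2 = x ^ 2 * y ^ 2 := hw_conj_inv_comm (hw_K1 h2)
    have cac : x ^ 2 * (x * y) ^ 2 = (x * y) ^ 2 * x ^ 2 :=
      hw_conj_inv_comm (hw_K3 h1 h2)
    have cbc : y ^ 2 * (x * y) ^ 2 = (x * y) ^ 2 * y ^ 2 :=
      hw_conj_inv_comm (hw_K4 h1 h2)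
    have hgen_comm : ∀ s ∈ ({x ^ 2, y ^ 2, (x * y) ^ 2} : Set (HW 2)),
        ∀ t ∈ ({x ^ 2, y ^ 2, (x * y) ^ 2} : Set (HW 2)), s * t = t * s := by
      intro s hs t ht
      simp only [Set.mem_insert_iff, Set.mem_singleton_iff] at hs ht
      rcases hs with rfl | rfl | rfl <;> rcases ht with rfl | rfl | rfl
      · rfl
      · exact cab.symm
      · exact cac
      · exact cab
      · rfl
      · exact cbc
      · exact cac.symm
      · exact cbc.symm
      · rfl
    -- every generator commutes with every element of N
    have h2' : ∀ s ∈ ({x ^ 2, y ^ 2, (x * y) ^ 2} : Set (HW 2)),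
        ∀ n ∈ N, s * n = n * s := by
      intro s hs n hn
      have : N ≤ Subgroup.centralizer {s} := by
        rw [hN]
        refine Subgroup.closure_le _ |>.mpr ?_
        intro p hp
        rw [SetLike.mem_coe, Subgroup.mem_centralizer_iff]
        intro q hq
        rw [Set.mem_singleton_iff] at hq
        rw [hq]
        exact hgen_comm s hs p hp
      have hns := this hn
      rw [Subgroup.mem_centralizer_iff] at hns
      exact hns s rfl
    intro a ha b hb
    have : N ≤ Subgroup.centralizer {a} := by
      rw [hN]
      refine Subgroup.closure_le _ |>.mpr ?_
      intro p hp
      rw [SetLike.mem_coe, Subgroup.mem_centralizer_iff]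
      intro q hq
      rw [Set.mem_singleton_iff] at hq
      rw [hq]
      exact (h2' p hp a ha).symm
    have hb' := this hb
    rw [Subgroup.mem_centralizer_iff] at hb'
    exact hb' a rfl
end

section
/- For n ≥ 2, the combinatorial Hantzsche-Wendt group Gₙ has trivial center. -/
namespace HWAux

variable {n : ℕ}

theorem _root_.List.Chain'.tail {α : Type*} {R : α → α → Prop} {a : α} {l : List α}
    (h : (a :: l).Chain' R) : l.Chain' R := List.IsChain.tail h

theorem chain'_nil {α : Type*} {R : α → α → Prop} : ([] : List α).Chain' R := List.isChain_nil

/-- sign: (-1)^(number of letters of `l` different from `j`) -/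
def eps (l : List (Fin n)) (j : Fin n) : ℤ := (-1) ^ (l.countP (fun a => a ≠ j))

def eta (i j : Fin n) : ℤ := if i = j then 1 else -1

@[simp] lemma eps_nil (j : Fin n) : eps [] j = 1 := rfl

lemma eps_cons (a : Fin n) (l : List (Fin n)) (j : Fin n) :
    eps (a :: l) j = eta a j * eps l j := by
  by_cases h : a = j <;> simp [eps, eta, List.countP_cons, h, pow_succ, mul_comm]

lemma eps_cons_ne {a j : Fin n} (h : a ≠ j) (l : List (Fin n)) :
    eps (a :: l) j = -eps l j := by
  rw [eps_cons, eta, if_neg h]; ring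

/-- the space on which `HW n` acts: reduced words together with an integer vector -/
abbrev X (n : ℕ) := {l : List (Fin n) // l.Chain' (· ≠ ·)} × (Fin n → ℤ)

lemma chain'_cons_of_head {i : Fin n} {l : List (Fin n)} (hl : l.Chain' (· ≠ ·))
    (h : l.head? ≠ some i) : (i :: l).Chain' (· ≠ ·) := by
  simp only [List.Chain', List.isChain_cons]
  exact ⟨fun b hb => fun hib => h (by rw [hb, hib]), hl⟩

lemma head?_tail_ne {i : Fin n} {t : List (Fin n)} (h : (i :: t).Chain' (· ≠ ·)) :
    t.head? ≠ some i := by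
  simp only [List.Chain', List.isChain_cons] at h
  intro hc
  exact (h.1 i hc) rfl

/-- action of generator `i` -/
def Fto (i : Fin n) : X n → X n :=
  fun p => if h : p.1.val.head? = some i then
    (⟨p.1.val.tail, List.IsChain.tail p.1.property⟩, p.2 + Pi.single i (eps p.1.val.tail i))
  else
    (⟨i :: p.1.val, chain'_cons_of_head p.1.property h⟩, p.2)

/-- inverse action of generator `i` -/
def Finv (i : Fin n) : X n → X n :=
  fun p => if h : p.1.val.head? = some i then
    (⟨p.1.val.tail, List.IsChain.tail p.1.property⟩, p.2)
  else
    (⟨i :: p.1.val, chain'_cons_of_head p.1.property h⟩, p.2 - Pi.single i (eps p.1.val i))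

lemma Fto_head (i : Fin n) (t : List (Fin n)) (ht : (i :: t).Chain' (· ≠ ·)) (c : Fin n → ℤ) :
    Fto i (⟨i :: t, ht⟩, c) = (⟨t, ht.tail⟩, c + Pi.single i (eps t i)) := by
  simp [Fto]

lemma Fto_not_head (i : Fin n) (l : List (Fin n)) (hl : l.Chain' (· ≠ ·))
    (h : l.head? ≠ some i) (c : Fin n → ℤ) :
    Fto i (⟨l, hl⟩, c) = (⟨i :: l, chain'_cons_of_head hl h⟩, c) := by
  simp [Fto, h]

lemma Finv_head (i : Fin n) (t : List (Fin n)) (ht : (i :: t).Chain' (· ≠ ·)) (c : Fin n → ℤ) :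
    Finv i (⟨i :: t, ht⟩, c) = (⟨t, ht.tail⟩, c) := by
  simp [Finv]

lemma Finv_not_head (i : Fin n) (l : List (Fin n)) (hl : l.Chain' (· ≠ ·))
    (h : l.head? ≠ some i) (c : Fin n → ℤ) :
    Finv i (⟨l, hl⟩, c) = (⟨i :: l, chain'_cons_of_head hl h⟩, c - Pi.single i (eps l i)) := by
  simp [Finv, h]

/-- the generator permutations -/
def f (i : Fin n) : Equiv.Perm (X n) where
  toFun := Fto i
  invFun := Finv i
  left_inv := by
    rintro ⟨⟨l, hl⟩, c⟩
    cases l with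
    | nil => rw [Fto_not_head _ _ _ (by simp), Finv_head]
    | cons a t =>
      by_cases h : a = i
      · subst h
        rw [Fto_head, Finv_not_head _ _ _ (head?_tail_ne hl)]
        simp
      · rw [Fto_not_head _ _ _ (by simp [h]), Finv_head]
  right_inv := by
    rintro ⟨⟨l, hl⟩, c⟩
    cases l with
    | nil =>
      rw [Finv_not_head _ _ _ (by simp), Fto_head]
      simp
    | cons a t =>
      by_cases h : a = i
      · subst h
        rw [Finv_head, Fto_not_head _ _ _ (head?_tail_ne hl)]
      · rw [Finv_not_head _ _ _ (by simp [h]), Fto_head]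
        simp


lemma f_sq (j : Fin n) (l : List (Fin n)) (hl : l.Chain' (· ≠ ·)) (c : Fin n → ℤ) :
    f j (f j (⟨l, hl⟩, c)) = (⟨l, hl⟩, c + Pi.single j (eps l j)) := by
  show Fto j (Fto j _) = _
  cases l with
  | nil =>
    have h1 : Fto j ((⟨[], hl⟩ : {l : List (Fin n) // l.Chain' (· ≠ ·)}), c)
        = (⟨[j], chain'_cons_of_head hl (by simp)⟩, c) := Fto_not_head _ _ _ (by simp) _
    rw [h1, Fto_head]
  | cons a t =>
    by_cases h : a = j
    · subst h
      have h1 : Fto a ((⟨a :: t, hl⟩ : {l : List (Fin n) // l.Chain' (· ≠ ·)}), c)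
          = (⟨t, hl.tail⟩, c + Pi.single a (eps t a)) := Fto_head _ _ _ _
      rw [h1, Fto_not_head _ _ _ (head?_tail_ne hl)]
      all_goals simp [eps_cons, eta]
    · have h1 : Fto j ((⟨a :: t, hl⟩ : {l : List (Fin n) // l.Chain' (· ≠ ·)}), c)
          = (⟨j :: a :: t, chain'_cons_of_head hl (by simp [h])⟩, c) :=
        Fto_not_head _ _ _ (by simp [h]) _
      rw [h1, Fto_head]
      all_goals simp [eps_cons, eta]

lemma f_sq' (j : Fin n) (l : List (Fin n)) (hl : l.Chain' (· ≠ ·)) (c : Fin n → ℤ) :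
    ((f j) ^ 2) (⟨l, hl⟩, c) = (⟨l, hl⟩, c + Pi.single j (eps l j)) := by
  rw [sq, Equiv.Perm.mul_apply, f_sq]

lemma hrels : ∀ r ∈ hwRels n, FreeGroup.lift f r = 1 := by
  rintro r ⟨i, j, hij, rfl⟩
  simp only [map_mul, map_inv, map_pow, FreeGroup.lift_apply_of]
  rw [mul_assoc, mul_assoc, inv_mul_eq_one]
  apply Equiv.ext
  rintro ⟨⟨l, hl⟩, c⟩
  simp only [Equiv.Perm.mul_apply]
  rw [f_sq' j l hl c]
  show Fto i _ = (f j ^ 2) (Fto i _)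
  cases l with
  | nil =>
    have h1 : Fto i ((⟨[], hl⟩ : {l : List (Fin n) // l.Chain' (· ≠ ·)}), c)
        = (⟨[i], chain'_cons_of_head hl (by simp)⟩, c) := Fto_not_head _ _ _ (by simp) _
    have h2 : Fto i ((⟨[], hl⟩ : {l : List (Fin n) // l.Chain' (· ≠ ·)}),
          c + Pi.single j (eps [] j))
        = (⟨[i], chain'_cons_of_head hl (by simp)⟩, c + Pi.single j (eps [] j)) :=
      Fto_not_head _ _ _ (by simp) _
    rw [h1, h2, f_sq']
    have : eps [i] j = -eps ([] : List (Fin n)) j := eps_cons_ne hij _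
    rw [this]
    congr 1
    funext b
    simp only [Pi.add_apply, Pi.single_apply]
    split <;> ring
  | cons a t =>
    by_cases h : a = i
    · subst h
      have h1 : Fto a ((⟨a :: t, hl⟩ : {l : List (Fin n) // l.Chain' (· ≠ ·)}),
            c + Pi.single j (eps (a :: t) j))
          = (⟨t, hl.tail⟩, c + Pi.single j (eps (a :: t) j) + Pi.single a (eps t a)) :=
        Fto_head _ _ _ _
      have h2 : Fto a ((⟨a :: t, hl⟩ : {l : List (Fin n) // l.Chain' (· ≠ ·)}), c)
          = (⟨t, hl.tail⟩, c + Pi.single a (eps t a)) := Fto_head _ _ _ _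
      rw [h1, h2, f_sq']
      have hji : eps (a :: t) j = -eps t j := eps_cons_ne (by simpa using hij) _
      rw [hji]
      congr 1
      funext b
      simp only [Pi.add_apply, Pi.single_apply]
      split <;> split <;> ring
    · have h1 : Fto i ((⟨a :: t, hl⟩ : {l : List (Fin n) // l.Chain' (· ≠ ·)}),
            c + Pi.single j (eps (a :: t) j))
          = (⟨i :: a :: t, chain'_cons_of_head hl (by simp [h])⟩,
            c + Pi.single j (eps (a :: t) j)) := Fto_not_head _ _ _ (by simp [h]) _
      have h2 : Fto i ((⟨a :: t, hl⟩ : {l : List (Fin n) // l.Chain' (· ≠ ·)}), c)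
          = (⟨i :: a :: t, chain'_cons_of_head hl (by simp [h])⟩, c) :=
        Fto_not_head _ _ _ (by simp [h]) _
      rw [h1, h2, f_sq']
      have : eps (i :: a :: t) j = -eps (a :: t) j := eps_cons_ne hij _
      rw [this]
      congr 1
      funext b
      simp only [Pi.add_apply, Pi.single_apply]
      split <;> ring

/-- the representation of `HW n` on `X n` -/
def Phi : HW n →* Equiv.Perm (X n) := PresentedGroup.toGroup hrels

@[simp] lemma Phi_of (i : Fin n) : Phi (PresentedGroup.of i : HW n) = f i :=
  PresentedGroup.toGroup.of hrels


/-! ### Algebra in `HW n` -/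

def xg (i : Fin n) : HW n := PresentedGroup.of i

def tg (i : Fin n) : HW n := xg i * xg i

lemma rel_one {i j : Fin n} (hij : i ≠ j) :
    (xg i)⁻¹ * tg j * xg i * tg j = 1 := by
  have h : PresentedGroup.mk (hwRels n)
      ((FreeGroup.of i)⁻¹ * (FreeGroup.of j) ^ 2 * FreeGroup.of i * (FreeGroup.of j) ^ 2) = 1 :=
    (QuotientGroup.eq_one_iff _).mpr (Subgroup.subset_normalClosure ⟨i, j, hij, rfl⟩)
  simpa [tg, xg, PresentedGroup.of, sq, map_mul, map_inv, map_pow, mul_assoc] using h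

lemma conj_t' (i j : Fin n) : (xg i)⁻¹ * tg j * xg i = tg j ^ eta i j := by
  by_cases h : i = j
  · subst h
    rw [eta, if_pos rfl, zpow_one]
    unfold tg
    group
  · rw [eta, if_neg h, zpow_neg, zpow_one]
    have := rel_one h
    rw [← eq_mul_inv_iff_mul_eq] at this
    rw [this, one_mul]

lemma conj_t (i j : Fin n) : xg i * tg j * (xg i)⁻¹ = tg j ^ eta i j := by
  by_cases h : i = j
  · subst h
    rw [eta, if_pos rfl, zpow_one]
    unfold tg
    group
  · have h1 := conj_t' i j
    rw [eta, if_neg h, zpow_neg, zpow_one] at h1 ⊢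
    have h2 : xg i * (tg j)⁻¹ * (xg i)⁻¹ = tg j := by rw [← h1]; group
    calc xg i * tg j * (xg i)⁻¹ = (xg i * (tg j)⁻¹ * (xg i)⁻¹)⁻¹ := by group
    _ = (tg j)⁻¹ := by rw [h2]

lemma conj_t_zpow (i j : Fin n) (m : ℤ) :
    xg i * tg j ^ m * (xg i)⁻¹ = tg j ^ (eta i j * m) := by
  rw [← conj_zpow, conj_t, ← zpow_mul]

lemma conj_t_zpow' (i j : Fin n) (m : ℤ) :
    (xg i)⁻¹ * tg j ^ m * xg i = tg j ^ (eta i j * m) := by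
  have h := conj_zpow (i := m) (a := (xg i)⁻¹) (b := tg j)
  rw [inv_inv] at h
  rw [← h, conj_t', ← zpow_mul]

lemma comm_t (i j : Fin n) : Commute (tg i) (tg j) := by
  by_cases h : i = j
  · subst h; exact Commute.refl _
  · have h1 : tg i * tg j * (tg i)⁻¹ = tg j := by
      have e1 : tg i * tg j * (tg i)⁻¹
          = xg i * (xg i * tg j * (xg i)⁻¹) * (xg i)⁻¹ := by
        simp only [tg]; group
      rw [e1, conj_t, eta, if_neg h, zpow_neg, zpow_one]
      have e2 : xg i * (tg j)⁻¹ * (xg i)⁻¹ = (xg i * tg j * (xg i)⁻¹)⁻¹ := by group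
      rw [e2, conj_t, eta, if_neg h, zpow_neg, zpow_one, inv_inv]
    exact mul_inv_eq_iff_eq_mul.mp h1

def sigma (i : Fin n) (c : Fin n → ℤ) : Fin n → ℤ := fun j => eta i j * c j

def Tg (c : Fin n → ℤ) : HW n := ((List.finRange n).map (fun j => tg j ^ c j)).prod

lemma Tg_list_add (L : List (Fin n)) (c d : Fin n → ℤ) :
    (L.map fun j => tg j ^ (c j + d j)).prod
      = (L.map fun j => tg j ^ c j).prod * (L.map fun j => tg j ^ d j).prod := by
  induction L with
  | nil => simp
  | cons a L ih =>
    have hc : Commute (tg a ^ d a) ((L.map fun j => tg j ^ c j).prod) := by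
      apply Commute.list_prod_right
      intro x hx
      obtain ⟨b, _, rfl⟩ := List.mem_map.mp hx
      exact (comm_t a b).zpow_zpow _ _
    simp only [List.map_cons, List.prod_cons]
    rw [ih, zpow_add]
    exact hc.mul_mul_mul_comm _ _

lemma Tg_add (c d : Fin n → ℤ) : Tg (c + d) = Tg c * Tg d := by
  have h : (fun j => tg j ^ ((c + d) j)) = fun j => tg (n := n) j ^ (c j + d j) := rfl
  rw [Tg, h, Tg_list_add]; rfl

@[simp] lemma Tg_zero : (Tg 0 : HW n) = 1 := by
  simp [Tg]

lemma Tg_list_single (L : List (Fin n)) (j : Fin n) (m : ℤ) :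
    (L.map fun k => tg k ^ ((Pi.single j m : Fin n → ℤ) k)).prod
      = tg j ^ (m * L.count j) := by
  induction L with
  | nil => simp
  | cons a L ih =>
    by_cases h : a = j
    · subst h
      simp only [List.map_cons, List.prod_cons, ih, Pi.single_eq_same,
        List.count_cons_self]
      rw [← zpow_add]
      congr 1
      push_cast
      ring
    · simp only [List.map_cons, List.prod_cons, ih, Pi.single_eq_of_ne h]
      rw [List.count_cons_of_ne h]
      simp

lemma Tg_single (j : Fin n) (m : ℤ) : (Tg (Pi.single j m) : HW n) = tg j ^ m := by
  rw [Tg, Tg_list_single, List.count_eq_one_of_mem (List.nodup_finRange n)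
    (List.mem_finRange j)]
  simp

lemma comm_t_Tg (k : Fin n) (m : ℤ) (c : Fin n → ℤ) : Commute (tg k ^ m) (Tg c) := by
  apply Commute.list_prod_right
  intro x hx
  obtain ⟨b, _, rfl⟩ := List.mem_map.mp hx
  exact (comm_t k b).zpow_zpow _ _

lemma conj_list_prod (g : HW n) (L : List (HW n)) :
    g * L.prod * g⁻¹ = (L.map fun a => g * a * g⁻¹).prod := by
  induction L with
  | nil => simp
  | cons a L ih =>
    rw [List.prod_cons, List.map_cons, List.prod_cons, ← ih]
    group

lemma Tg_conj (i : Fin n) (c : Fin n → ℤ) : xg i * Tg c * (xg i)⁻¹ = Tg (sigma i c) := by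
  rw [Tg, conj_list_prod, List.map_map, Tg]
  congr 1
  apply List.map_congr_left
  intro b _
  show xg i * tg b ^ c b * (xg i)⁻¹ = tg b ^ (sigma i c b)
  rw [conj_t_zpow]; rfl

def Pg (l : List (Fin n)) : HW n := (l.map xg).prod

@[simp] lemma Pg_nil : (Pg [] : HW n) = 1 := rfl

lemma Pg_cons (a : Fin n) (l : List (Fin n)) : Pg (a :: l) = xg a * Pg l := by
  simp [Pg]

lemma Pg_append (l l' : List (Fin n)) : Pg (l ++ l') = Pg l * Pg l' := by
  simp [Pg]

lemma Pg_conj (l : List (Fin n)) (j : Fin n) :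
    (Pg l)⁻¹ * tg j * Pg l = tg j ^ (eps l j) := by
  induction l with
  | nil => simp
  | cons a l ih =>
    rw [Pg_cons, eps_cons]
    have e1 : (xg a * Pg l)⁻¹ * tg j * (xg a * Pg l)
        = (Pg l)⁻¹ * ((xg a)⁻¹ * tg j * xg a) * Pg l := by group
    rw [e1, conj_t']
    have e2 : (Pg l)⁻¹ * tg j ^ eta a j * Pg l
        = ((Pg l)⁻¹ * tg j * Pg l) ^ eta a j := by
      have := conj_zpow (i := eta a j) (a := (Pg l)⁻¹) (b := tg j)
      rw [inv_inv] at this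
      rw [this]
    rw [e2, ih, ← zpow_mul, mul_comm (eps l j)]


/-! ### The normal form section and key identity -/

def PP : X n → HW n := fun p => Pg p.1.val * Tg p.2

lemma Qgen (i : Fin n) (p : X n) : PP (f i p) = xg i * PP p := by
  obtain ⟨⟨l, hl⟩, c⟩ := p
  show PP (Fto i _) = _
  cases l with
  | nil =>
    rw [Fto_not_head _ _ _ (by simp)]
    simp [PP, Pg_cons, mul_assoc]
  | cons a t =>
    by_cases h : a = i
    · subst h
      rw [Fto_head]
      show Pg t * Tg (c + Pi.single a (eps t a)) = xg a * (Pg (a :: t) * Tg c)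
      rw [Tg_add, Tg_single, Pg_cons]
      have hcm : tg a ^ (eps t a) * Tg c = Tg c * tg a ^ (eps t a) :=
        (comm_t_Tg a (eps t a) c).eq
      have hPg : Pg t * tg a ^ (eps t a) = tg a * Pg t := by
        rw [← Pg_conj]
        group
      calc Pg t * (Tg c * tg a ^ eps t a) = Pg t * tg a ^ eps t a * Tg c := by
            rw [← hcm, mul_assoc]
        _ = tg a * Pg t * Tg c := by rw [hPg]
        _ = xg a * (xg a * Pg t * Tg c) := by rw [tg]; group
        _ = xg a * (xg a * Pg t * Tg c) := rfl
    · rw [Fto_not_head _ _ _ (by simp [h])]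
      show Pg (i :: a :: t) * Tg c = xg i * (Pg (a :: t) * Tg c)
      rw [Pg_cons, mul_assoc]

lemma Qinv {z : HW n} (hz : ∀ p : X n, PP (Phi z p) = z * PP p) :
    ∀ p : X n, PP (Phi z⁻¹ p) = z⁻¹ * PP p := by
  intro p
  have h := hz (Phi z⁻¹ p)
  have hcomp : Phi z (Phi z⁻¹ p) = p := by
    rw [map_inv]
    exact Equiv.apply_symm_apply _ _
  rw [hcomp] at h
  rw [eq_inv_mul_iff_mul_eq, ← h]

lemma Qmain (z : HW n) : ∀ p : X n, PP (Phi z p) = z * PP p := by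
  refine PresentedGroup.induction_on
    (C := fun z => ∀ p : X n, PP (Phi z p) = z * PP p) z ?_
  intro w
  refine FreeGroup.induction_on w ?_ ?_ ?_ ?_
  · intro p
    rw [map_one, map_one, Equiv.Perm.one_apply, one_mul]
  · intro i p
    have : (PresentedGroup.mk (hwRels n)) (FreeGroup.of i) = xg i := rfl
    rw [this]
    have hP : Phi (xg i) = f i := Phi_of i
    rw [hP]
    exact Qgen i p
  · intro i h
    have : (PresentedGroup.mk (hwRels n)) (FreeGroup.of i)⁻¹ = (xg i)⁻¹ := by
      rw [map_inv]; rfl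
    rw [this]
    have h' : ∀ p : X n, PP (Phi (xg i) p) = xg i * PP p := h
    exact Qinv h'
  · intro u v hu hv p
    rw [map_mul, map_mul, Equiv.Perm.mul_apply, hu, hv, mul_assoc]

/-! ### evaluation at the base point -/

def base (c : Fin n → ℤ) : X n := (⟨[], chain'_nil⟩, c)

lemma E_t (j : Fin n) (l : List (Fin n)) (hl : l.Chain' (· ≠ ·)) (c : Fin n → ℤ) :
    Phi (tg j) (⟨l, hl⟩, c) = (⟨l, hl⟩, c + Pi.single j (eps l j)) := by
  rw [tg, map_mul, Equiv.Perm.mul_apply]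
  have hP : Phi (xg j) = f j := Phi_of j
  rw [hP]
  show f j (f j _) = _
  rw [f_sq]

lemma E_t_inv (j : Fin n) (l : List (Fin n)) (hl : l.Chain' (· ≠ ·)) (c : Fin n → ℤ) :
    Phi (tg j)⁻¹ (⟨l, hl⟩, c) = (⟨l, hl⟩, c - Pi.single j (eps l j)) := by
  rw [map_inv]
  rw [Equiv.Perm.inv_def, Equiv.symm_apply_eq, E_t]
  congr 1
  funext b
  simp only [Pi.add_apply, Pi.sub_apply]
  ring

lemma E_t_zpow (j : Fin n) (m : ℤ) (l : List (Fin n)) (hl : l.Chain' (· ≠ ·))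
    (c : Fin n → ℤ) :
    Phi (tg j ^ m) (⟨l, hl⟩, c) = (⟨l, hl⟩, c + Pi.single j (m * eps l j)) := by
  induction m using Int.induction_on generalizing c with
  | zero => simp
  | succ k ih =>
    have : tg (n := n) j ^ ((k : ℤ) + 1) = tg j ^ (k : ℤ) * tg j := by
      rw [zpow_add, zpow_one]
    rw [this, map_mul, Equiv.Perm.mul_apply, E_t, ih]
    congr 1
    funext b
    simp only [Pi.add_apply, Pi.single_apply]
    split <;> ring
  | pred k ih =>
    have : tg (n := n) j ^ (-(k : ℤ) - 1) = tg j ^ (-(k : ℤ)) * (tg j)⁻¹ := by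
      rw [← zpow_neg_one, ← zpow_add]
      ring_nf
    rw [this, map_mul, Equiv.Perm.mul_apply, E_t_inv, ih]
    congr 1
    funext b
    simp only [Pi.add_apply, Pi.sub_apply, Pi.single_apply]
    split <;> ring

lemma E_T_list (L : List (Fin n)) (c : Fin n → ℤ) (d : Fin n → ℤ) :
    Phi ((L.map fun j => tg j ^ c j).prod) (base d)
      = base (d + (L.map fun j => (Pi.single j (c j) : Fin n → ℤ)).sum) := by
  induction L with
  | nil => simp [base]
  | cons a L ih =>
    rw [List.map_cons, List.prod_cons, map_mul, Equiv.Perm.mul_apply, ih]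
    show Phi (tg a ^ c a) ((⟨[], chain'_nil⟩ : {l : List (Fin n) // l.Chain' (· ≠ ·)}), _)
        = _
    rw [E_t_zpow]
    show ((⟨[], chain'_nil⟩ : {l : List (Fin n) // l.Chain' (· ≠ ·)}), _) = base _
    unfold base
    congr 1
    rw [List.map_cons, List.sum_cons]
    funext b
    simp only [Pi.add_apply, eps_nil, mul_one]
    ring

lemma E_T (c d : Fin n → ℤ) : Phi (Tg c) (base d) = base (d + c) := by
  rw [Tg, E_T_list]
  congr 1
  have : ((List.finRange n).map fun j => (Pi.single j (c j) : Fin n → ℤ)).sum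
      = ∑ j, (Pi.single j (c j) : Fin n → ℤ) := by
    rw [Fin.sum_univ_def]
  rw [this, Finset.univ_sum_single]

lemma E_P : ∀ (l : List (Fin n)) (hl : l.Chain' (· ≠ ·)) (c : Fin n → ℤ),
    Phi (Pg l) (base c) = (⟨l, hl⟩, c)
  | [], hl, c => by simp [base]
  | a :: t, hl, c => by
    rw [Pg_cons, map_mul, Equiv.Perm.mul_apply, E_P t hl.tail c]
    have hP : Phi (xg a) = f a := Phi_of a
    rw [hP]
    show Fto a _ = _
    rw [Fto_not_head _ _ _ (head?_tail_ne hl)]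



lemma sigma_invol (i : Fin n) (c : Fin n → ℤ) : sigma i (sigma i c) = c := by
  funext j
  simp only [sigma, eta]
  split <;> ring

lemma Tg_swap (k : Fin n) (c : Fin n → ℤ) : Tg c * xg k = xg k * Tg (sigma k c) := by
  have h := Tg_conj k (sigma k c)
  rw [sigma_invol] at h
  rw [← h]
  group

/-! ### Main theorem -/

lemma center_trivial (hn : 2 ≤ n) (z : HW n) (hz : z ∈ Subgroup.center (HW n)) :
    z = 1 := by
  haveI : Nontrivial (Fin n) := Fin.nontrivial_iff_two_le.mpr hn
  have hcen : ∀ g : HW n, g * z = z * g := fun g => Subgroup.mem_center_iff.mp hz g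
  rcases hE : Phi z (base 0) with ⟨⟨l₀, hl₀⟩, c₀⟩
  have hz0 : z = Pg l₀ * Tg c₀ := by
    have h := Qmain z (base 0)
    rw [hE] at h
    have hb : PP (base (0 : Fin n → ℤ)) = 1 := by simp [PP, base]
    rw [hb, mul_one] at h
    exact h.symm
  cases l₀ with
  | cons i s =>
    exfalso
    obtain ⟨k, hk⟩ := exists_ne i
    have hki : ((i :: s).head? ≠ some k) := by simp [Ne.symm hk]
    have hch2 : (k :: i :: s).Chain' (· ≠ ·) := List.isChain_cons_cons.mpr ⟨hk, hl₀⟩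
    have hchk : ([k] : List (Fin n)).Chain' (· ≠ ·) := List.isChain_singleton k
    have hfk : Phi (xg k) = f k := Phi_of k
    -- commute z with x k, evaluated at the base point
    have hcomm : Phi z (Phi (xg k) (base 0)) = Phi (xg k) (Phi z (base 0)) := by
      rw [← Equiv.Perm.mul_apply, ← Equiv.Perm.mul_apply, ← map_mul, ← map_mul, hcen (xg k)]
    have h1 : Phi (xg k) (base 0) = (⟨[k], hchk⟩, 0) := by
      rw [hfk]
      exact Fto_not_head k [] chain'_nil (by simp) 0
    have h2 : Phi (xg k) ((⟨i :: s, hl₀⟩ : {l : List (Fin n) // l.Chain' (· ≠ ·)}), c₀)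
        = (⟨k :: i :: s, hch2⟩, c₀) := by
      rw [hfk]
      exact Fto_not_head k (i :: s) hl₀ hki c₀
    rw [h1, hE, h2] at hcomm
    -- normal form of z * x k
    have h3 := Qmain z (⟨[k], hchk⟩, 0)
    rw [hcomm] at h3
    have hPPk : PP ((⟨[k], hchk⟩ : {l : List (Fin n) // l.Chain' (· ≠ ·)}),
        (0 : Fin n → ℤ)) = xg k := by
      simp [PP, Pg_cons]
    rw [hPPk] at h3
    have h4 : z = Pg (k :: i :: s) * Tg c₀ * (xg k)⁻¹ := by
      have : PP ((⟨k :: i :: s, hch2⟩ : {l : List (Fin n) // l.Chain' (· ≠ ·)}), c₀)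
          = Pg (k :: i :: s) * Tg c₀ := rfl
      rw [this] at h3
      rw [h3]
      group
    by_cases hlast : (i :: s).getLast (List.cons_ne_nil i s) = k
    · -- the word ends with k : cancellation, z = Pg (k :: s') * Tg (sigma k c₀)
      set s' := (i :: s).dropLast with hs'
      have hsplit : i :: s = s' ++ [k] := by
        conv_lhs => rw [← List.dropLast_append_getLast (List.cons_ne_nil i s)]
        rw [hlast]
      have hs'ne : s' ≠ [] := by
        intro hcon
        rw [hcon, List.nil_append] at hsplit
        have : i = k := by simpa using congrArg List.head? hsplit
        exact hk this.symm
      have hhead : s'.head? = some i := by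
        have := congrArg List.head? hsplit
        rw [List.head?_append_of_ne_nil _ hs'ne] at this
        simpa using this.symm
      have hchs' : s'.Chain' (· ≠ ·) := by
        have : (s' ++ [k]).Chain' (· ≠ ·) := hsplit ▸ hl₀
        exact (List.isChain_append.mp this).1
      have hchks' : (k :: s').Chain' (· ≠ ·) := by
        simp only [List.Chain', List.isChain_cons]
        refine ⟨?_, hchs'⟩
        intro b hb
        rw [hhead] at hb
        simp only [Option.mem_def, Option.some.injEq] at hb
        subst hb
        exact hk
      have hP1 : Pg (k :: i :: s) = Pg (k :: s') * xg k := by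
        have : k :: i :: s = (k :: s') ++ [k] := by
          rw [List.cons_append, ← hsplit]
        rw [this, Pg_append]
        simp [Pg_cons]
      have h5 : z = Pg (k :: s') * Tg (sigma k c₀) := by
        rw [h4, hP1]
        have : Pg (k :: s') * xg k * Tg c₀ * (xg k)⁻¹
            = Pg (k :: s') * (xg k * Tg c₀ * (xg k)⁻¹) := by group
        rw [this, Tg_conj]
      have hE2 : Phi z (base 0) = (⟨k :: s', hchks'⟩, sigma k c₀) := by
        rw [h5, map_mul, Equiv.Perm.mul_apply, E_T, zero_add, E_P]
      rw [hE] at hE2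
      have hlist : i :: s = k :: s' := congrArg (fun p => p.1.val) hE2
      have : i = k := by simpa using congrArg List.head? hlist
      exact hk this.symm
    · have hgl : (k :: i :: s).getLast? = some ((i :: s).getLast (List.cons_ne_nil i s)) := by
        rw [List.getLast?_cons_cons]
        exact List.getLast?_eq_getLast _
      have hch3 : ((k :: i :: s) ++ [k]).Chain' (· ≠ ·) := by
        simp only [List.Chain', List.isChain_append]
        refine ⟨hch2, List.isChain_singleton k, ?_⟩
        intro x hx y hy
        rw [hgl] at hx
        simp only [Option.mem_def, Option.some.injEq] at hx
        simp only [List.head?_cons, Option.mem_def, Option.some.injEq] at hy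
        subst hx
        subst hy
        exact hlast
      have hxkinv : (xg k)⁻¹ = xg k * (tg k)⁻¹ := by rw [tg]; group
      have h6 : z = Pg ((k :: i :: s) ++ [k]) * Tg (sigma k c₀ + Pi.single k (-1)) := by
        rw [h4, hxkinv]
        have e1 : Pg (k :: i :: s) * Tg c₀ * (xg k * (tg k)⁻¹)
            = Pg (k :: i :: s) * (Tg c₀ * xg k) * (tg k)⁻¹ := by group
        rw [e1, Tg_swap]
        have e2 : Tg (sigma k c₀ + Pi.single k (-1))
            = Tg (sigma k c₀) * (tg k)⁻¹ := by
          rw [Tg_add, Tg_single, zpow_neg, zpow_one]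
        rw [e2, Pg_append]
        simp only [Pg_cons, Pg_nil, mul_one]
        group
      have hE3 : Phi z (base 0)
          = (⟨(k :: i :: s) ++ [k], hch3⟩, sigma k c₀ + Pi.single k (-1)) := by
        rw [h6, map_mul, Equiv.Perm.mul_apply, E_T, zero_add, E_P]
      rw [hE] at hE3
      have hlist : i :: s = (k :: i :: s) ++ [k] := congrArg (fun p => p.1.val) hE3
      have hlen := congrArg List.length hlist
      simp only [List.length_cons, List.length_append, List.length_cons,
        List.length_nil] at hlen
      omega
  | nil =>
    have hzT : z = Tg c₀ := by simpa using hz0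
    have hc0 : c₀ = 0 := by
      funext j
      obtain ⟨i, hij⟩ := exists_ne j
      have hconj : Tg (sigma i c₀) = Tg c₀ := by
        rw [← Tg_conj, ← hzT, hcen (xg i)]
        group
      have hEv := congrArg (fun g => Phi g (base 0)) hconj
      simp only [E_T, zero_add] at hEv
      have : sigma i c₀ = c₀ := by
        have := congrArg Prod.snd hEv
        simpa [base] using this
      have hj := congrArg (fun c => c j) this
      simp only [sigma, eta, if_neg hij] at hj
      simp only [Pi.zero_apply]
      omega
    rw [hzT, hc0, Tg_zero]

end HWAux

theorem hw_trivial_center (n : ℕ) (hn : 2 ≤ n) :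
    Subgroup.center (HW n) = ⊥ := by
  rw [eq_bot_iff]
  intro z hz
  rw [Subgroup.mem_bot]
  exact HWAux.center_trivial hn z hz
end

section
/- Every diffuse group satisfies the unique product property. -/
def IsDiffuse (G : Type*) [Group G] : Prop :=
  ∀ A : Finset G, A.Nonempty →
    ∃ a ∈ A, ∀ g : G, g ≠ 1 → g * a ∉ A ∨ g⁻¹ * a ∉ A

def HasUniqueProduct (G : Type*) [Group G] : Prop :=
  ∀ X Y : Finset G, X.Nonempty → Y.Nonempty →
    ∃ g : G, ∃! p : G × G, p.1 ∈ X ∧ p.2 ∈ Y ∧ p.1 * p.2 = g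

/-!
Take an extremal point `a` of the product set `X * Y` given by diffuseness. If `a = x₁ y₁ = x₂ y₂`
with `g = x₂ x₁⁻¹ ≠ 1`, then both `g a = x₂ y₁` and `g⁻¹ a = x₁ y₂` lie in `X * Y`, contradicting
extremality; so `a` has a unique representation.
-/

open scoped Pointwise

theorem UniqueMul.of_forall_ne_one {G : Type*} [Group G] [DecidableEq G]
    {X Y : Finset G} {x y : G} (hx : x ∈ X) (hy : y ∈ Y)
    (hxy : ∀ g : G, g ≠ 1 → g * (x * y) ∉ X * Y ∨ g⁻¹ * (x * y) ∉ X * Y) :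
    UniqueMul X Y x y := by
  intro x' y' hx' hy' he
  have hg : x' * x⁻¹ = 1 := by
    by_contra hg
    have hleft : x' * x⁻¹ * (x * y) ∈ X * Y := by
      simpa using Finset.mul_mem_mul hx' hy
    have hright : (x' * x⁻¹)⁻¹ * (x * y) ∈ X * Y := by
      rw [← he]
      simpa [mul_assoc] using Finset.mul_mem_mul hx hy'
    exact (hxy _ hg).elim (· hleft) (· hright)
  obtain rfl : x' = x := mul_inv_eq_one.1 hg
  exact ⟨rfl, mul_left_cancel he⟩

theorem IsDiffuse.uniqueProds {G : Type*} [Group G] (h : IsDiffuse G) : UniqueProds G where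
  uniqueMul_of_nonempty {X Y} hX hY := by
    classical
    obtain ⟨a, ha, hext⟩ := h (X * Y) (hX.mul hY)
    obtain ⟨x, hx, y, hy, rfl⟩ := Finset.mem_mul.1 ha
    exact ⟨x, hx, y, hy, .of_forall_ne_one hx hy hext⟩

theorem UniqueProds.hasUniqueProduct {G : Type*} [Group G] [UniqueProds G] :
    HasUniqueProduct G := by
  intro X Y hX hY
  obtain ⟨x, hx, y, hy, hu⟩ := UniqueProds.uniqueMul_of_nonempty hX hY
  obtain ⟨g, hg⟩ := UniqueMul.exists_iff_exists_existsUnique.1 ⟨x, y, hx, hy, hu⟩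
  exact ⟨g, by simpa only [Finset.mem_product, and_assoc] using hg⟩

theorem diffuse_uniqueProduct {G : Type*} [Group G] (h : IsDiffuse G) :
    HasUniqueProduct G :=
  have := h.uniqueProds
  UniqueProds.hasUniqueProduct
end
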